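/- arXiv:2409.12314 — 4 statements merged into one kernel-verified Lean document; each statement's English description precedes it below -/
import Mathlib

section
/- Under the binary-distance model with C_P poisoned concepts (each replacing m of its n samples with poison from a distinct unpoisoned target concept), the structure AD term ((1-α)/N²)·Σ_{i,k} |D_img(x_i,x_k) - D_txt(y_i,y_k)| is bounded below by (2(1-α)·m·(n-m)/N² + 2(1-α)·m·(n-m)/N²)·C_P, i.e., by 4(1-α)·m·(n-m)·C_P/N². -/
/-!
Call a sample poisoned if its image lies in the target concept `t p` of its text concept `p`.
Such a sample disagrees, in exactly one of the two binary distances, with every benign sample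
of `p` (same text, different image) and with every sample of the clean concept `t p`
(same image, different text): `(n - m) + n ≥ 2 (n - m)` partners for each of the `m` poisoned
samples of each of the `C_P` poisoned concepts. Every such pair is counted in both orders,
which gives `4 m (n - m) C_P` pairs at distance gap `1`.
-/

open Finset

lemma two_mul_card_le_sum_of_symm {ι : Type*} [Fintype ι] [DecidableEq ι]
    {g : ι → ι → ℝ} (hg : ∀ i k, 0 ≤ g i k) (hsymm : ∀ i k, g i k = g k i)
    {S : Finset (ι × ι)} (hS : ∀ z ∈ S, 1 ≤ g z.1 z.2) (hswap : ∀ z ∈ S, z.swap ∉ S) :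
    2 * (#S : ℝ) ≤ ∑ i, ∑ k, g i k := by
  set T := S.map (Equiv.prodComm ι ι).toEmbedding
  have hT : ∀ z ∈ T, 1 ≤ g z.1 z.2 := by
    simp only [T, mem_map_equiv]
    intro z hz
    simpa [hsymm z.1 z.2] using hS _ hz
  have hdisj : Disjoint S T := by
    rw [disjoint_left]
    intro z hzS hzT
    exact hswap z hzS (by simpa [T] using hzT)
  calc 2 * (#S : ℝ) = #(S ∪ T) := by
        rw [card_union_of_disjoint hdisj, card_map]; push_cast; ring
    _ = ∑ _z ∈ S ∪ T, (1 : ℝ) := by simp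
    _ ≤ ∑ z ∈ S ∪ T, g z.1 z.2 := sum_le_sum fun z hz => (mem_union.1 hz).elim (hS z) (hT z)
    _ ≤ ∑ z : ι × ι, g z.1 z.2 := sum_le_univ_sum_of_nonneg fun z => hg z.1 z.2
    _ = ∑ i, ∑ k, g i k := Fintype.sum_prod_type _

lemma abs_ite_sub_ite_eq_one {a b : Prop} [Decidable a] [Decidable b] (h : ¬(a ↔ b)) :
    |(if a then (0 : ℝ) else 1) - (if b then 0 else 1)| = 1 := by
  by_cases ha : a <;> by_cases hb : b <;> simp_all

namespace Poisoning

variable {ι κ : Type*} [Fintype ι] [DecidableEq ι] [DecidableEq κ]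
  (imgC txtC : ι → κ) (t : κ → κ)

def textClass (c : κ) : Finset ι := {i | txtC i = c}

def poisonedSamples (p : κ) : Finset ι := {i | txtC i = p ∧ imgC i = t p}

def benignSamples (p : κ) : Finset ι := {i | txtC i = p ∧ imgC i = p}

def mismatchedPairs (P : Finset κ) : Finset (ι × ι) :=
  P.biUnion fun p =>
    poisonedSamples imgC txtC t p ×ˢ (benignSamples imgC txtC p ∪ textClass txtC (t p))

variable {imgC txtC t} {P : Finset κ}

lemma card_benignSamples {n m : ℕ} {p : κ} (hp : p ∈ P) (ht_ne : t p ≠ p)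
    (hcount : #(textClass txtC p) = n) (hpois : #(poisonedSamples imgC txtC t p) = m)
    (hshape : ∀ i, txtC i ∈ P → imgC i = txtC i ∨ imgC i = t (txtC i)) :
    #(benignSamples imgC txtC p) = n - m := by
  have hsplit : textClass txtC p = benignSamples imgC txtC p ∪ poisonedSamples imgC txtC t p := by
    ext i
    simp only [textClass, benignSamples, poisonedSamples, mem_filter, mem_union, mem_univ,
      true_and]
    constructor
    · rintro rfl
      exact (hshape i hp).imp (⟨rfl, ·⟩) (⟨rfl, ·⟩)
    · rintro (⟨h, _⟩ | ⟨h, _⟩) <;> exact h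
  have hdisj : Disjoint (benignSamples imgC txtC p) (poisonedSamples imgC txtC t p) := by
    rw [disjoint_left]
    simp only [benignSamples, poisonedSamples, mem_filter, mem_univ, true_and]
    rintro i ⟨-, hi⟩ ⟨-, hi'⟩
    exact ht_ne (hi'.symm.trans hi)
  rw [hsplit, card_union_of_disjoint hdisj, hpois] at hcount
  omega

lemma card_mismatchedPairs {n m : ℕ} (ht_ne : ∀ p ∈ P, t p ≠ p)
    (hcount : ∀ c, #(textClass txtC c) = n)
    (hpois : ∀ p ∈ P, #(poisonedSamples imgC txtC t p) = m)
    (hshape : ∀ i, txtC i ∈ P → imgC i = txtC i ∨ imgC i = t (txtC i)) :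
    #(mismatchedPairs imgC txtC t P) = #P * (m * ((n - m) + n)) := by
  rw [mismatchedPairs, card_biUnion]
  · rw [sum_const_nat fun p hp => ?_, mul_comm]
    have hdisj : Disjoint (benignSamples imgC txtC p) (textClass txtC (t p)) := by
      rw [disjoint_left]
      simp only [benignSamples, textClass, mem_filter, mem_univ, true_and]
      rintro i ⟨hi, -⟩ hi'
      exact ht_ne p hp (hi'.symm.trans hi)
    rw [card_product, card_union_of_disjoint hdisj, hpois p hp, hcount,
      card_benignSamples hp (ht_ne p hp) (hcount p) (hpois p hp) hshape]
  · intro p _ q _ hpq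
    rw [Function.onFun_apply, disjoint_left]
    simp only [poisonedSamples, mem_product, mem_filter, mem_univ, true_and]
    rintro z ⟨⟨rfl, -⟩, -⟩ ⟨⟨h, -⟩, -⟩
    exact hpq h

lemma not_iff_of_mem_mismatchedPairs (ht_ne : ∀ p ∈ P, t p ≠ p) (ht_out : ∀ p ∈ P, t p ∉ P)
    {z : ι × ι} (hclean : ∀ i, txtC i ∉ P → imgC i = txtC i)
    (hz : z ∈ mismatchedPairs imgC txtC t P) : ¬(imgC z.1 = imgC z.2 ↔ txtC z.1 = txtC z.2) := by
  simp only [mismatchedPairs, poisonedSamples, benignSamples, textClass, mem_biUnion,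
    mem_product, mem_filter, mem_union, mem_univ, true_and] at hz
  obtain ⟨p, hp, ⟨hi, hi'⟩, ⟨hk, hk'⟩ | hk⟩ := hz
  · rw [hi, hi', hk, hk']
    simpa using ht_ne p hp
  · have hk' : imgC z.2 = t p := (hclean z.2 (hk ▸ ht_out p hp)).trans hk
    rw [hi, hi', hk, hk']
    simpa using (ht_ne p hp).symm

lemma swap_notMem_mismatchedPairs (ht_ne : ∀ p ∈ P, t p ≠ p) (ht_out : ∀ p ∈ P, t p ∉ P)
    {z : ι × ι} (hz : z ∈ mismatchedPairs imgC txtC t P) : z.swap ∉ mismatchedPairs imgC txtC t P := by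
  simp only [mismatchedPairs, poisonedSamples, benignSamples, textClass, mem_biUnion,
    mem_product, mem_filter, mem_union, mem_univ, true_and, Prod.fst_swap, Prod.snd_swap] at hz ⊢
  obtain ⟨p, hp, ⟨rfl, hi⟩, -⟩ := hz
  rintro ⟨q, hq, ⟨rfl, hk⟩, ⟨hpq, hiq⟩ | hpq⟩
  · exact ht_ne _ hp (hi.symm.trans (hiq.trans hpq.symm))
  · exact ht_out _ hq (hpq ▸ hp)

end Poisoning

open Poisoning in
theorem stmt_2_general (C n m CP : ℕ)
    (N : ℕ)
    (α : ℝ) (hα1 : α ≤ 1)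
    (imgC txtC : Fin N → Fin C)
    (P : Finset (Fin C)) (hP : P.card = CP)
    (t : Fin C → Fin C)
    (ht_ne : ∀ p ∈ P, t p ≠ p) (ht_out : ∀ p ∈ P, t p ∉ P)
    (hcount : ∀ c : Fin C, (Finset.univ.filter (fun i => txtC i = c)).card = n)
    (hpois : ∀ p ∈ P,
      (Finset.univ.filter (fun i => txtC i = p ∧ imgC i = t p)).card = m)
    (hshape : ∀ i : Fin N, txtC i ∈ P → imgC i = txtC i ∨ imgC i = t (txtC i))
    (hclean : ∀ i : Fin N, txtC i ∉ P → imgC i = txtC i) :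
    ((1 - α) / (N:ℝ)^2) *
        ∑ i : Fin N, ∑ k : Fin N,
          |(if imgC i = imgC k then (0:ℝ) else 1) -
            (if txtC i = txtC k then (0:ℝ) else 1)|
      ≥ 4 * (1 - α) * (m:ℝ) * ((n - m : ℕ):ℝ) * (CP:ℝ) / (N:ℝ)^2 := by
  have hpairs : 2 * (#(mismatchedPairs imgC txtC t P) : ℝ) ≤ ∑ i : Fin N, ∑ k : Fin N,
      |(if imgC i = imgC k then (0:ℝ) else 1) - (if txtC i = txtC k then (0:ℝ) else 1)| :=
    two_mul_card_le_sum_of_symm (fun _ _ => abs_nonneg _) (fun i k => by simp only [eq_comm])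
      (fun z hz => (abs_ite_sub_ite_eq_one (not_iff_of_mem_mismatchedPairs ht_ne ht_out hclean hz)).ge)
      (fun z hz => swap_notMem_mismatchedPairs ht_ne ht_out hz)
  rw [card_mismatchedPairs ht_ne hcount hpois hshape, hP] at hpairs
  have hcount_le : 4 * m * (n - m) * CP ≤ 2 * (CP * (m * ((n - m) + n))) := by
    calc 4 * m * (n - m) * CP = 2 * (CP * (m * ((n - m) + (n - m)))) := by ring
      _ ≤ 2 * (CP * (m * ((n - m) + n))) := by gcongr; exact Nat.sub_le n m
  have hcoef : 0 ≤ (1 - α) / (N:ℝ)^2 := div_nonneg (by linarith) (by positivity)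
  calc 4 * (1 - α) * (m:ℝ) * ((n - m : ℕ):ℝ) * (CP:ℝ) / (N:ℝ)^2
      = ((1 - α) / (N:ℝ)^2) * ((4 * m * (n - m) * CP : ℕ) : ℝ) := by push_cast; ring
    _ ≤ ((1 - α) / (N:ℝ)^2) * ∑ i : Fin N, ∑ k : Fin N,
          |(if imgC i = imgC k then (0:ℝ) else 1) - (if txtC i = txtC k then (0:ℝ) else 1)| :=
        mul_le_mul_of_nonneg_left (le_trans (by exact_mod_cast hcount_le) hpairs) hcoef

/-- With C_P poisoned concepts (each replacing m of its n samples with poison from a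
distinct unpoisoned target concept), the structure AD term is at least
4(1-α)·m·(n-m)·C_P/N². -/
theorem stmt_2 (C n m CP : ℕ) (hn : 0 < n) (hm : 0 < m) (hmn : m < n)
    (N : ℕ) (hN : N = C * n) (hNpos : 0 < N)
    (α : ℝ) (hα0 : 0 ≤ α) (hα1 : α ≤ 1)
    (imgC txtC : Fin N → Fin C)
    (P : Finset (Fin C)) (hP : P.card = CP)
    (t : Fin C → Fin C)
    (ht_inj : Set.InjOn t P) (ht_ne : ∀ p ∈ P, t p ≠ p) (ht_out : ∀ p ∈ P, t p ∉ P)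
    (hcount : ∀ c : Fin C, (Finset.univ.filter (fun i => txtC i = c)).card = n)
    (hpois : ∀ p ∈ P,
      (Finset.univ.filter (fun i => txtC i = p ∧ imgC i = t p)).card = m)
    (hshape : ∀ i : Fin N, txtC i ∈ P → imgC i = txtC i ∨ imgC i = t (txtC i))
    (hclean : ∀ i : Fin N, txtC i ∉ P → imgC i = txtC i) :
    ((1 - α) / (N:ℝ)^2) *
        ∑ i : Fin N, ∑ k : Fin N,
          |(if imgC i = imgC k then (0:ℝ) else 1) -
            (if txtC i = txtC k then (0:ℝ) else 1)|
      ≥ 4 * (1 - α) * (m:ℝ) * ((n - m : ℕ):ℝ) * (CP:ℝ) / (N:ℝ)^2 :=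
  stmt_2_general C n m CP N α hα1 imgC txtC P hP t ht_ne ht_out hcount hpois hshape hclean
end

section
/- When a single concept p with n_p samples is poisoned by replacing m of them (ρ = m/N), and the per-pair change in the structure term introduced by any poison sample is at most Δ_structure while poison samples interact with samples outside p and the target concept t identically to the replaced benign samples, then the change in structure AD is at most 2(1-α)·ρ·((n_p + n_t)/N − ρ)·Δ_structure, where n_t is the number of samples of the target concept t. -/
/-- Poisoning a single concept p (m of its n_p samples, target concept t with n_t samples)
changes structure AD by at most 2(1-α)·ρ·((n_p+n_t)/N − ρ)·Δ_structure, ρ = m/N. -/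
theorem stmt_5 (N np nt m : ℕ) (hN : 0 < N) (hm : 0 < m) (hmnp : m ≤ np)
    (α Δs : ℝ) (hα0 : 0 ≤ α) (hα1 : α ≤ 1) (hΔ : 0 ≤ Δs)
    (S B T : Finset (Fin N))
    (hS : S.card = m) (hB : B.card = np - m) (hT : T.card = nt)
    (hSB : Disjoint S B) (hST : Disjoint S T) (hBT : Disjoint B T)
    (g g' : Fin N → Fin N → ℝ)
    (hunch : ∀ i k : Fin N,
      ¬(i ∈ S ∧ k ∈ B ∪ T) → ¬(k ∈ S ∧ i ∈ B ∪ T) → g' i k = g i k)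
    (hbd : ∀ i ∈ S, ∀ k ∈ B ∪ T, g' i k - g i k ≤ Δs ∧ g' k i - g k i ≤ Δs) :
    ((1 - α) / (N:ℝ)^2) * ((∑ i, ∑ k, g' i k) - (∑ i, ∑ k, g i k))
      ≤ 2 * (1 - α) * ((m:ℝ)/N) * (((np:ℝ) + nt)/N - (m:ℝ)/N) * Δs := by
  have hSBT : Disjoint S (B ∪ T) := Finset.disjoint_union_right.mpr ⟨hSB, hST⟩
  set E := S ×ˢ (B ∪ T) ∪ (B ∪ T) ×ˢ S with hE
  have hdisj : Disjoint (S ×ˢ (B ∪ T)) ((B ∪ T) ×ˢ S) := by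
    rw [Finset.disjoint_left]
    rintro ⟨a, b⟩ hab hab'
    rw [Finset.mem_product] at hab hab'
    exact (Finset.disjoint_left.mp hSBT) hab.1 hab'.1
  have hcardBT : (B ∪ T).card = (np - m) + nt := by
    rw [Finset.card_union_of_disjoint hBT, hB, hT]
  have hcardE : (E.card : ℝ) = 2 * m * ((np : ℝ) - m + nt) := by
    rw [hE, Finset.card_union_of_disjoint hdisj, Finset.card_product,
      Finset.card_product, hS, hcardBT]
    have : ((np - m : ℕ) : ℝ) = (np : ℝ) - m := by
      exact Nat.cast_sub hmnp
    push_cast [this]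
    ring
  have hsum : (∑ i, ∑ k, g' i k) - (∑ i, ∑ k, g i k)
      = ∑ p ∈ E, (g' p.1 p.2 - g p.1 p.2) := by
    rw [← Finset.sum_sub_distrib]
    simp_rw [← Finset.sum_sub_distrib]
    rw [← Finset.sum_product']
    refine (Finset.sum_subset (Finset.subset_univ E) ?_).symm
    intro p _ hp
    have h1 : ¬(p.1 ∈ S ∧ p.2 ∈ B ∪ T) := by
      intro h
      exact hp (Finset.mem_union_left _ (Finset.mem_product.mpr h))
    have h2 : ¬(p.2 ∈ S ∧ p.1 ∈ B ∪ T) := by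
      intro h
      exact hp (Finset.mem_union_right _ (Finset.mem_product.mpr ⟨h.2, h.1⟩))
    rw [hunch p.1 p.2 h1 h2, sub_self]
  have hsum_le : ∑ p ∈ E, (g' p.1 p.2 - g p.1 p.2) ≤ (E.card : ℝ) * Δs := by
    have := Finset.sum_le_card_nsmul E (fun p => g' p.1 p.2 - g p.1 p.2) Δs ?_
    · simpa [nsmul_eq_mul] using this
    · intro p hp
      rcases Finset.mem_union.mp hp with h | h
      · obtain ⟨h1, h2⟩ := Finset.mem_product.mp h
        exact (hbd p.1 h1 p.2 h2).1
      · obtain ⟨h1, h2⟩ := Finset.mem_product.mp h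
        exact (hbd p.2 h2 p.1 h1).2
  have hc : (0:ℝ) ≤ (1 - α) / (N:ℝ)^2 := div_nonneg (by linarith) (by positivity)
  calc ((1 - α) / (N:ℝ)^2) * ((∑ i, ∑ k, g' i k) - (∑ i, ∑ k, g i k))
      ≤ ((1 - α) / (N:ℝ)^2) * ((E.card : ℝ) * Δs) := by
        rw [hsum]; exact mul_le_mul_of_nonneg_left hsum_le hc
    _ = 2 * (1 - α) * ((m:ℝ)/N) * (((np:ℝ) + nt)/N - (m:ℝ)/N) * Δs := by
        rw [hcardE]
        have hN' : (N:ℝ) ≠ 0 := by positivity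
        field_simp
        ring
end

section
/- Poisoning a single concept changes AD by at most α·ρ·Δ_feature + 2(1-α)·ρ·((n_p + n_t)/N − ρ)·Δ_structure; in particular, if n_p + n_t ≤ εN and ρ ≤ ε for small ε, the AD change is at most α·ρ·Δ_feature + 4(1-α)·ε²·Δ_structure ≤ αρ + 4ε². -/
/-- Poisoning a single concept changes AD by at most
α·ρ·Δ_feature + 2(1-α)·ρ·((n_p+n_t)/N − ρ)·Δ_structure; if n_p+n_t ≤ εN and ρ ≤ ε this
is at most α·ρ·Δ_feature + 4(1-α)·ε²·Δ_structure ≤ αρ + 4ε². -/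
theorem stmt_6 (N np nt m : ℕ) (hN : 0 < N) (hm : 0 < m) (hmnp : m ≤ np)
    (α Δf Δs ε : ℝ) (hα0 : 0 ≤ α) (hα1 : α ≤ 1)
    (hΔf0 : 0 ≤ Δf) (hΔf1 : Δf ≤ 1) (hΔs0 : 0 ≤ Δs) (hΔs1 : Δs ≤ 1)
    (hε : 0 ≤ ε) (hεn : (np:ℝ) + nt ≤ ε * N) (hερ : (m:ℝ)/N ≤ ε)
    (S B T : Finset (Fin N))
    (hS : S.card = m) (hB : B.card = np - m) (hT : T.card = nt)
    (hSB : Disjoint S B) (hST : Disjoint S T) (hBT : Disjoint B T)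
    (b b' : Fin N → ℝ)
    (hb : ∀ i, 0 ≤ b i)
    (hb' : ∀ i ∈ S, 0 ≤ b' i ∧ b' i ≤ Δf)
    (hbsame : ∀ i ∉ S, b' i = b i)
    (g g' : Fin N → Fin N → ℝ)
    (hunch : ∀ i k : Fin N,
      ¬(i ∈ S ∧ k ∈ B ∪ T) → ¬(k ∈ S ∧ i ∈ B ∪ T) → g' i k = g i k)
    (hbd : ∀ i ∈ S, ∀ k ∈ B ∪ T, g' i k - g i k ≤ Δs ∧ g' k i - g k i ≤ Δs) :
    (((α / N) * (∑ i, b' i) + ((1 - α)/(N:ℝ)^2) * ∑ i, ∑ k, g' i k)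
        - ((α / N) * (∑ i, b i) + ((1 - α)/(N:ℝ)^2) * ∑ i, ∑ k, g i k)
      ≤ α * ((m:ℝ)/N) * Δf
        + 2 * (1 - α) * ((m:ℝ)/N) * (((np:ℝ) + nt)/N - (m:ℝ)/N) * Δs)
    ∧ (α * ((m:ℝ)/N) * Δf
        + 2 * (1 - α) * ((m:ℝ)/N) * (((np:ℝ) + nt)/N - (m:ℝ)/N) * Δs
      ≤ α * ((m:ℝ)/N) * Δf + 4 * (1 - α) * ε^2 * Δs)
    ∧ (α * ((m:ℝ)/N) * Δf + 4 * (1 - α) * ε^2 * Δs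
      ≤ α * ((m:ℝ)/N) + 4 * ε^2) := by

  have hNR : (0:ℝ) < N := by exact_mod_cast hN
  have hρ0 : (0:ℝ) ≤ (m:ℝ)/N := by positivity
  set U := B ∪ T with hUdef
  have hSU : Disjoint S U := Finset.disjoint_union_right.mpr ⟨hSB, hST⟩
  have hUcard : (U.card : ℝ) = (np : ℝ) + nt - m := by
    have h : U.card = (np - m) + nt := by
      rw [hUdef, Finset.card_union_of_disjoint hBT, hB, hT]
    rw [h]
    push_cast [Nat.cast_sub hmnp]
    ring
  -- feature bound
  have hfeat : (∑ i, b' i) - (∑ i, b i) ≤ (m:ℝ) * Δf := by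
    have h1 : (∑ i, b' i) - (∑ i, b i) = ∑ i ∈ S, (b' i - b i) := by
      rw [← Finset.sum_sub_distrib]
      exact (Finset.sum_subset (Finset.subset_univ S)
        (fun i _ hi => by rw [hbsame i hi]; ring)).symm
    rw [h1]
    calc ∑ i ∈ S, (b' i - b i) ≤ ∑ i ∈ S, Δf :=
          Finset.sum_le_sum fun i hi => by linarith [(hb' i hi).2, hb i]
      _ = (m:ℝ) * Δf := by rw [Finset.sum_const, hS, nsmul_eq_mul]
  -- structure bound
  set P := (S ×ˢ U) ∪ (U ×ˢ S) with hPdef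
  have hPdisj : Disjoint (S ×ˢ U) (U ×ˢ S) := by
    rw [Finset.disjoint_left]
    rintro ⟨i, k⟩ h1 h2
    rw [Finset.mem_product] at h1 h2
    exact (Finset.disjoint_left.mp hSU) h1.1 h2.1
  have hPcard : (P.card : ℝ) = 2 * m * ((np:ℝ) + nt - m) := by
    rw [hPdef, Finset.card_union_of_disjoint hPdisj, Finset.card_product,
      Finset.card_product, hS]
    push_cast [hUcard]
    ring
  have hstruct : (∑ i, ∑ k, g' i k) - (∑ i, ∑ k, g i k)
      ≤ 2 * m * ((np:ℝ) + nt - m) * Δs := by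
    have h1 : (∑ i, ∑ k, g' i k) - (∑ i, ∑ k, g i k)
        = ∑ p ∈ Finset.univ ×ˢ Finset.univ, (g' p.1 p.2 - g p.1 p.2) := by
      rw [Finset.sum_product]
      simp [Finset.sum_sub_distrib]
    have h2 : ∑ p ∈ Finset.univ ×ˢ Finset.univ, (g' p.1 p.2 - g p.1 p.2)
        = ∑ p ∈ P, (g' p.1 p.2 - g p.1 p.2) := by
      refine (Finset.sum_subset (Finset.subset_univ P) ?_).symm
      rintro ⟨i, k⟩ _ hp
      simp only [hPdef, Finset.mem_union, Finset.mem_product, not_or, not_and] at hp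
      have := hunch i k (fun h => hp.1 h.1 h.2) (fun h => hp.2 h.2 h.1)
      simp [this]
    have h3 : ∑ p ∈ P, (g' p.1 p.2 - g p.1 p.2) ≤ P.card • Δs := by
      refine Finset.sum_le_card_nsmul _ _ _ ?_
      rintro ⟨i, k⟩ hp
      simp only [hPdef, Finset.mem_union, Finset.mem_product] at hp
      rcases hp with ⟨hi, hk⟩ | ⟨hi, hk⟩
      · exact (hbd i hi k hk).1
      · exact (hbd k hk i hi).2
    rw [h1, h2]
    calc ∑ p ∈ P, (g' p.1 p.2 - g p.1 p.2) ≤ P.card • Δs := h3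
      _ = (P.card : ℝ) * Δs := by rw [nsmul_eq_mul]
      _ = 2 * m * ((np:ℝ) + nt - m) * Δs := by rw [hPcard]
  refine ⟨?_, ?_, ?_⟩
  · have hα' : (0:ℝ) ≤ α / N := by positivity
    have hβ' : (0:ℝ) ≤ (1 - α)/(N:ℝ)^2 := by
      apply div_nonneg (by linarith) (by positivity)
    have e1 : α * ((m:ℝ)/N) * Δf = (α / N) * ((m:ℝ) * Δf) := by ring
    have e2 : 2 * (1 - α) * ((m:ℝ)/N) * (((np:ℝ) + nt)/N - (m:ℝ)/N) * Δs
        = ((1 - α)/(N:ℝ)^2) * (2 * m * ((np:ℝ) + nt - m) * Δs) := by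
      field_simp
    rw [e1, e2]
    have := mul_le_mul_of_nonneg_left hfeat hα'
    have := mul_le_mul_of_nonneg_left hstruct hβ'
    nlinarith [mul_le_mul_of_nonneg_left hfeat hα',
      mul_le_mul_of_nonneg_left hstruct hβ']
  · have hσ : ((np:ℝ) + nt)/N ≤ ε := by
      rw [div_le_iff₀ hNR]; linarith
    have hρσ : (m:ℝ)/N ≤ ((np:ℝ) + nt)/N := by
      gcongr
      have h : (m:ℝ) ≤ np := by exact_mod_cast hmnp
      have hnt : (0:ℝ) ≤ nt := Nat.cast_nonneg nt
      linarith
    have h1 : (m:ℝ)/N * (((np:ℝ) + nt)/N - (m:ℝ)/N) ≤ ε * ε := by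
      apply mul_le_mul hερ (by linarith) (by linarith) hε
    have hc : (0:ℝ) ≤ (1 - α) * Δs := mul_nonneg (by linarith) hΔs0
    have key := mul_le_mul_of_nonneg_left h1 hc
    have hE : (0:ℝ) ≤ (1 - α) * Δs * (ε * ε) :=
      mul_nonneg hc (mul_nonneg hε hε)
    have hstep : 2 * (1 - α) * ((m:ℝ)/N) * (((np:ℝ) + nt)/N - (m:ℝ)/N) * Δs
        ≤ 4 * (1 - α) * ε^2 * Δs := by
      calc 2 * (1 - α) * ((m:ℝ)/N) * (((np:ℝ) + nt)/N - (m:ℝ)/N) * Δs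
          = 2 * ((1 - α) * Δs * ((m:ℝ)/N * (((np:ℝ) + nt)/N - (m:ℝ)/N))) := by ring
        _ ≤ 2 * ((1 - α) * Δs * (ε * ε)) := by linarith
        _ = 4 * (1 - α) * ε^2 * Δs - 2 * ((1 - α) * Δs * (ε * ε)) := by ring
        _ ≤ 4 * (1 - α) * ε^2 * Δs := by linarith
    linarith
  · have haρ : (0:ℝ) ≤ α * ((m:ℝ)/N) := mul_nonneg hα0 hρ0
    have h1 : α * ((m:ℝ)/N) * Δf ≤ α * ((m:ℝ)/N) := by
      calc α * ((m:ℝ)/N) * Δf ≤ α * ((m:ℝ)/N) * 1 :=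
            mul_le_mul_of_nonneg_left hΔf1 haρ
        _ = α * ((m:ℝ)/N) := mul_one _
    have hα' : (0:ℝ) ≤ 1 - α := by linarith
    have hc1 : (1 - α) * Δs ≤ 1 :=
      mul_le_one₀ (by linarith) hΔs0 hΔs1
    have hε2 : (0:ℝ) ≤ 4 * ε^2 := by positivity
    have h2 : 4 * (1 - α) * ε^2 * Δs ≤ 4 * ε^2 := by
      calc 4 * (1 - α) * ε^2 * Δs = 4 * ε^2 * ((1 - α) * Δs) := by ring
        _ ≤ 4 * ε^2 * 1 := mul_le_mul_of_nonneg_left hc1 hε2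
        _ = 4 * ε^2 := mul_one _
    linarith
end

section
/- Under the binary-distance model with all C_P poisoned concepts having mutually distinct and unpoisoned target concepts, the exact AD of the poisoned dataset equals α·m·C_P/N + (1-α)·(2·m·(n−m) + 2·m·n)·C_P/N², assuming no other inter-concept image/text entanglements exist. -/
/-- With C_P poisoned concepts having mutually distinct, unpoisoned targets and no
other entanglements, the exact AD equals
α·m·C_P/N + (1-α)·(2m(n−m) + 2mn)·C_P/N². -/
theorem stmt_15 (C n m CP : ℕ) (hn : 0 < n) (hm : 0 < m) (hmn : m < n)
    (N : ℕ) (hN : N = C * n) (hNpos : 0 < N)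
    (α : ℝ) (hα0 : 0 ≤ α) (hα1 : α ≤ 1)
    (imgC txtC : Fin N → Fin C)
    (P : Finset (Fin C)) (hP : P.card = CP)
    (t : Fin C → Fin C)
    (ht_inj : Set.InjOn t P) (ht_ne : ∀ p ∈ P, t p ≠ p) (ht_out : ∀ p ∈ P, t p ∉ P)
    (hcount : ∀ c : Fin C, (Finset.univ.filter (fun i => txtC i = c)).card = n)
    (hpois : ∀ p ∈ P,
      (Finset.univ.filter (fun i => txtC i = p ∧ imgC i = t p)).card = m)
    (hshape : ∀ i : Fin N, txtC i ∈ P → imgC i = txtC i ∨ imgC i = t (txtC i))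
    (hclean : ∀ i : Fin N, txtC i ∉ P → imgC i = txtC i) :
    (α / N) * ∑ i : Fin N, (if imgC i = txtC i then (0:ℝ) else 1)
      + ((1 - α) / (N:ℝ)^2) *
        ∑ i : Fin N, ∑ k : Fin N,
          |(if imgC i = imgC k then (0:ℝ) else 1) -
            (if txtC i = txtC k then (0:ℝ) else 1)|
    = α * m * CP / N
      + (1 - α) * (2 * (m:ℝ) * ((n - m : ℕ):ℝ) + 2 * (m:ℝ) * (n:ℝ)) * (CP:ℝ) / (N:ℝ)^2 := by
  classical
  set f : Fin N → Fin N → ℝ := fun i k =>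
    |(if imgC i = imgC k then (0:ℝ) else 1) - (if txtC i = txtC k then (0:ℝ) else 1)|
    with hf
  have hfval : ∀ i k, f i k = if ((imgC i = imgC k) ↔ (txtC i = txtC k)) then 0 else 1 := by
    intro i k
    by_cases h1 : imgC i = imgC k <;> by_cases h2 : txtC i = txtC k <;>
      norm_num [hf, h1, h2]
  have hfsymm : ∀ i k, f i k = f k i := by
    intro i k
    rw [hfval, hfval]
    have e1 : (imgC k = imgC i) ↔ (imgC i = imgC k) := eq_comm
    have e2 : (txtC k = txtC i) ↔ (txtC i = txtC k) := eq_comm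
    simp only [e1, e2]
  set S : Finset (Fin N) := Finset.univ.filter (fun i => ¬ imgC i = txtC i) with hS
  have hmemS : ∀ i, i ∈ S ↔ txtC i ∈ P ∧ imgC i = t (txtC i) := by
    intro i
    simp only [hS, Finset.mem_filter, Finset.mem_univ, true_and]
    constructor
    · intro h
      by_cases hp : txtC i ∈ P
      · rcases hshape i hp with h1 | h1
        · exact absurd h1 h
        · exact ⟨hp, h1⟩
      · exact absurd (hclean i hp) h
    · rintro ⟨hp, he⟩
      rw [he]
      exact ht_ne _ hp
  have hScard : S.card = CP * m := by
    have hSeq : S = P.biUnion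
        (fun p => Finset.univ.filter (fun i => txtC i = p ∧ imgC i = t p)) := by
      ext i
      simp only [Finset.mem_biUnion, Finset.mem_filter, Finset.mem_univ, true_and, hmemS]
      constructor
      · rintro ⟨hp, he⟩
        exact ⟨txtC i, hp, rfl, he⟩
      · rintro ⟨p, hp, h1, h2⟩
        rw [h1]
        exact ⟨hp, h2⟩
    rw [hSeq, Finset.card_biUnion]
    · rw [Finset.sum_congr rfl (fun p hp => hpois p hp), Finset.sum_const, hP,
        smul_eq_mul]
    · intro p hp q hq hpq
      refine Finset.disjoint_left.2 ?_
      intro i hi hi'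
      simp only [Finset.mem_filter, Finset.mem_univ, true_and] at hi hi'
      exact hpq (hi.1.symm.trans hi'.1)
  -- count of clean samples of a given concept
  have hcleanP : ∀ p ∈ P,
      (Finset.univ.filter (fun k => txtC k = p ∧ imgC k = txtC k)).card = n - m := by
    intro p hp
    have hsplit : (Finset.univ.filter (fun k => txtC k = p)).card
        = (Finset.univ.filter (fun k => txtC k = p ∧ imgC k = txtC k)).card
          + (Finset.univ.filter (fun k => txtC k = p ∧ ¬ imgC k = txtC k)).card := by
      rw [← Finset.filter_filter, ← Finset.filter_filter,
        Finset.card_filter_add_card_filter_not]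
    have heq2 : Finset.univ.filter (fun k => txtC k = p ∧ ¬ imgC k = txtC k)
        = Finset.univ.filter (fun k => txtC k = p ∧ imgC k = t p) := by
      ext k
      simp only [Finset.mem_filter, Finset.mem_univ, true_and]
      constructor
      · rintro ⟨h1, h2⟩
        rcases hshape k (h1 ▸ hp) with h3 | h3
        · exact absurd h3 h2
        · exact ⟨h1, h1 ▸ h3⟩
      · rintro ⟨h1, h2⟩
        refine ⟨h1, ?_⟩
        rw [h1, h2]
        exact ht_ne _ hp
      
    rw [hcount p, heq2, hpois p hp] at hsplit
    omega
  have htargetP : ∀ p ∈ P,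
      (Finset.univ.filter (fun k => txtC k = t p ∧ imgC k = txtC k)).card = n := by
    intro p hp
    have heq : Finset.univ.filter (fun k => txtC k = t p ∧ imgC k = txtC k)
        = Finset.univ.filter (fun k => txtC k = t p) := by
      ext k
      simp only [Finset.mem_filter, Finset.mem_univ, true_and]
      refine ⟨fun h => h.1, fun h => ⟨h, hclean k ?_⟩⟩
      rw [h]
      exact ht_out p hp
    rw [heq, hcount]
  -- the row formula for a poisoned sample i
  have hrow : ∀ i ∈ S, ∀ k, f i k =
      if (imgC k = txtC k ∧ (txtC k = txtC i ∨ txtC k = t (txtC i))) then (1:ℝ) else 0 := by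
    intro i hi k
    obtain ⟨hp, he⟩ := (hmemS i).1 hi
    rw [hfval]
    by_cases hk : imgC k = txtC k
    · by_cases h1 : txtC k = txtC i
      · have himg : ¬ imgC i = imgC k := by
          rw [he, hk, h1]
          exact ht_ne _ hp
        have hiff : ¬ ((imgC i = imgC k) ↔ (txtC i = txtC k)) := by
          intro hcon
          exact himg (hcon.2 h1.symm)
        rw [if_neg hiff, if_pos ⟨hk, Or.inl h1⟩]
      · by_cases h2 : txtC k = t (txtC i)
        · have himg : imgC i = imgC k := by rw [he, hk, h2]
          have htxt : ¬ txtC i = txtC k := by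
            intro hcon
            exact ht_ne _ hp (h2 ▸ hcon.symm ▸ rfl)
          have hiff : ¬ ((imgC i = imgC k) ↔ (txtC i = txtC k)) := by
            intro hcon
            exact htxt (hcon.1 himg)
          rw [if_neg hiff, if_pos ⟨hk, Or.inr h2⟩]
        · have himg : ¬ imgC i = imgC k := by
            rw [he, hk]
            intro hcon
            exact h2 hcon.symm
          have htxt : ¬ txtC i = txtC k := fun hcon => h1 hcon.symm
          have hiff : ((imgC i = imgC k) ↔ (txtC i = txtC k)) := by
            constructor
            · intro h; exact absurd h himg
            · intro h; exact absurd h htxt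
          rw [if_pos hiff, if_neg (fun hcon => hcon.2.elim h1 h2)]
    · have hkS : k ∈ S := by
        simp only [hS, Finset.mem_filter, Finset.mem_univ, true_and]
        exact hk
      obtain ⟨hq, he2⟩ := (hmemS k).1 hkS
      have hiff : (imgC i = imgC k) ↔ (txtC i = txtC k) := by
        rw [he, he2]
        constructor
        · intro h; exact ht_inj hp hq h
        · intro h; rw [h]
      rw [if_pos hiff, if_neg (fun hcon => hk hcon.1)]
  have hrowsum : ∀ i ∈ S, ∑ k : Fin N, f i k = (((n - m) + n : ℕ) : ℝ) := by
    intro i hi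
    obtain ⟨hp, _⟩ := (hmemS i).1 hi
    rw [Finset.sum_congr rfl (fun k _ => hrow i hi k), Finset.sum_boole]
    have hsplit : Finset.univ.filter
          (fun k => imgC k = txtC k ∧ (txtC k = txtC i ∨ txtC k = t (txtC i)))
        = (Finset.univ.filter (fun k => txtC k = txtC i ∧ imgC k = txtC k))
          ∪ (Finset.univ.filter (fun k => txtC k = t (txtC i) ∧ imgC k = txtC k)) := by
      ext k
      simp only [Finset.mem_union, Finset.mem_filter, Finset.mem_univ, true_and]
      tauto
    have hdisj : Disjoint
        (Finset.univ.filter (fun k => txtC k = txtC i ∧ imgC k = txtC k))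
        (Finset.univ.filter (fun k => txtC k = t (txtC i) ∧ imgC k = txtC k)) := by
      refine Finset.disjoint_left.2 ?_
      intro k hk hk'
      simp only [Finset.mem_filter, Finset.mem_univ, true_and] at hk hk'
      exact ht_ne _ hp (hk'.1 ▸ hk.1 ▸ rfl)
    rw [hsplit, Finset.card_union_of_disjoint hdisj, hcleanP _ hp, htargetP _ hp]
  have hpp : ∀ i ∈ S, ∀ k ∈ S, f i k = 0 := by
    intro i hi k hk
    rw [hrow i hi k]
    have hk' : ¬ imgC k = txtC k := by
      simpa only [hS, Finset.mem_filter, Finset.mem_univ, true_and] using hk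
    simp [hk']
  have hcc : ∀ i k, i ∉ S → k ∉ S → f i k = 0 := by
    intro i k hi hk
    have hi' : imgC i = txtC i := by
      simpa only [hS, Finset.mem_filter, Finset.mem_univ, true_and, not_not] using hi
    have hk' : imgC k = txtC k := by
      simpa only [hS, Finset.mem_filter, Finset.mem_univ, true_and, not_not] using hk
    rw [hfval, hi', hk']
    simp
  -- total sum
  have hT : ∑ i : Fin N, ∑ k : Fin N, f i k
      = 2 * ((CP * m : ℕ) : ℝ) * (((n - m) + n : ℕ) : ℝ) := by
    have hsplit := Finset.sum_filter_add_sum_filter_not Finset.univ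
      (fun i => ¬ imgC i = txtC i) (fun i => ∑ k : Fin N, f i k)
    have hA : ∑ i ∈ S, ∑ k : Fin N, f i k = ((CP * m : ℕ) : ℝ) * (((n - m) + n : ℕ) : ℝ) := by
      rw [Finset.sum_congr rfl (fun i hi => hrowsum i hi), Finset.sum_const, hScard,
        nsmul_eq_mul]
    have hSc : Finset.univ.filter (fun i => ¬¬ imgC i = txtC i) = Sᶜ := by
      ext i
      simp [hS, Finset.mem_compl]
    have hB : ∑ i ∈ Sᶜ, ∑ k : Fin N, f i k
        = ((CP * m : ℕ) : ℝ) * (((n - m) + n : ℕ) : ℝ) := by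
      have step1 : ∀ i ∈ Sᶜ, ∑ k : Fin N, f i k = ∑ k ∈ S, f i k := by
        intro i hi
        have hi' : i ∉ S := Finset.mem_compl.1 hi
        rw [← Finset.sum_filter_add_sum_filter_not Finset.univ
          (fun k => ¬ imgC k = txtC k) (fun k => f i k)]
        have h2 : ∑ k ∈ Finset.univ.filter (fun k => ¬¬ imgC k = txtC k), f i k = 0 := by
          apply Finset.sum_eq_zero
          intro k hk
          rw [hSc] at hk
          exact hcc i k hi' (Finset.mem_compl.1 hk)
        rw [h2, add_zero]
      rw [Finset.sum_congr rfl step1, Finset.sum_comm]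
      have step2 : ∀ k ∈ S, ∑ i ∈ Sᶜ, f i k = (((n - m) + n : ℕ) : ℝ) := by
        intro k hk
        have h3 : ∑ i ∈ Sᶜ, f i k = ∑ i ∈ Sᶜ, f k i :=
          Finset.sum_congr rfl (fun i _ => hfsymm i k)
        have h4 : ∑ i ∈ S, f k i = 0 :=
          Finset.sum_eq_zero (fun i hi => hpp k hk i hi)
        have h5 : ∑ i ∈ S, f k i + ∑ i ∈ Sᶜ, f k i = ∑ i : Fin N, f k i :=
          Finset.sum_add_sum_compl S (fun i => f k i)
        rw [h3]
        have := hrowsum k hk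
        linarith [h5, h4, this]
      rw [Finset.sum_congr rfl step2, Finset.sum_const, hScard, nsmul_eq_mul]
    rw [← hsplit]
    have : Finset.univ.filter (fun i => ¬ imgC i = txtC i) = S := rfl
    rw [this, hSc, hA, hB]
    ring
  have hsum1 : ∑ i : Fin N, (if imgC i = txtC i then (0:ℝ) else 1) = ((CP * m : ℕ) : ℝ) := by
    have h1 : ∀ i : Fin N, (if imgC i = txtC i then (0:ℝ) else 1)
        = if ¬ imgC i = txtC i then (1:ℝ) else 0 := by
      intro i; by_cases h : imgC i = txtC i <;> simp [h]
    rw [Finset.sum_congr rfl (fun i _ => h1 i), Finset.sum_boole, ← hS, hScard]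
  have hTf : ∑ i : Fin N, ∑ k : Fin N,
      |(if imgC i = imgC k then (0:ℝ) else 1) - (if txtC i = txtC k then (0:ℝ) else 1)|
      = 2 * ((CP * m : ℕ) : ℝ) * (((n - m) + n : ℕ) : ℝ) := hT
  rw [hsum1, hTf]
  push_cast
  ring
end
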